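/- arXiv:2605.07679 — 5 statements merged into one kernel-verified Lean document; each statement's English description precedes it below -/
import Mathlib

section
/- Let f, m, n ≥ 2 be integers, let k be an integer with 0 < mn − k ≤ k < mn, and let t be a real number. Set a = (f−1)·k·(mn−k)/(m(n−1)). Let x₁ and x₃ be real numbers satisfying x₁ + x₃ = t·mn/k − (f−2)(mn−k) and x₁·x₃ = −a (i.e. x₁, x₃ are the two real roots of x² + ((f−2)(mn−k) − tmn/k)·x − a = 0), ordered so that |x₁| ≥ |x₃|. Then x₁² − (f−1)·x₃² = (f−1)(f−2)·k·(mn−k)/(m(n−1)) holds if and only if t = (k(f−2)/(mn))·(mn − k + √(k(mn−k)/(m(n−1)))) or t = (k(f−2)/(mn))·(mn − k − √(k(mn−k)/(m(n−1)))). -/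
/-!
Write `A = k(mn−k)/(m(n−1)) > 0`, so that `x₁x₃ = −(f−1)A`. Substituting this product for the
constant turns the condition into `(x₁ − x₃)(x₁ + (f−1)x₃) = 0`, and `x₁ ≠ x₃` because
`x₁x₃ < 0`; so the condition says `x₁ = −(f−1)x₃`. On the other hand
`(x₁ + (f−1)x₃)(x₃ + (f−1)x₁) = (f−1)((x₁+x₃)² − (f−2)²A)`, and `|x₃| ≤ |x₁|` makes the
vanishing of the second factor imply that of the first. Hence the condition is
`(x₁ + x₃)² = (f−2)²A`, i.e. `x₁ + x₃ = ±(f−2)√A`, which is linear in `t`.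
-/

section Identities

variable {R : Type*} [CommRing R] {F A x y : R}

theorem sq_sub_mul_sq_sub_eq_of_mul_eq (h : x * y = -((F - 1) * A)) :
    x ^ 2 - (F - 1) * y ^ 2 - (F - 1) * (F - 2) * A = (x - y) * (x + (F - 1) * y) := by
  linear_combination -(F - 2) * h

theorem add_mul_mul_add_mul_eq_of_mul_eq (h : x * y = -((F - 1) * A)) :
    (x + (F - 1) * y) * (y + (F - 1) * x) = (F - 1) * ((x + y) ^ 2 - (F - 2) ^ 2 * A) := by
  linear_combination (F - 2) ^ 2 * h

end Identities

section Ordered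

variable {K : Type*} [Field K] [LinearOrder K] [IsStrictOrderedRing K] {F A x y : K}

theorem add_mul_eq_zero_of_add_mul_eq_zero_of_abs_le (hF : 2 ≤ F) (hyx : |y| ≤ |x|)
    (h : y + (F - 1) * x = 0) : x + (F - 1) * y = 0 := by
  have hy : y = -((F - 1) * x) := eq_neg_of_add_eq_zero_left h
  have habs : |y| = (F - 1) * |x| := by
    rw [hy, abs_neg, abs_mul, abs_of_nonneg (by linarith)]
  have hdeg : (F - 2) * |x| = 0 :=
    le_antisymm (by linarith) (mul_nonneg (by linarith) (abs_nonneg x))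
  rcases mul_eq_zero.mp hdeg with hF2 | hx
  · rw [hy]
    linear_combination (-F * x) * hF2
  · rw [hy, abs_eq_zero.mp hx]
    ring

theorem sq_sub_mul_sq_eq_iff_add_sq_eq (hF : 2 ≤ F) (hA : 0 < A)
    (hp : x * y = -((F - 1) * A)) (hyx : |y| ≤ |x|) :
    x ^ 2 - (F - 1) * y ^ 2 = (F - 1) * (F - 2) * A ↔ (x + y) ^ 2 = (F - 2) ^ 2 * A := by
  have hF1 : 0 < F - 1 := by linarith
  have hxy : x - y ≠ 0 := by
    intro h
    rw [sub_eq_zero.mp h] at hp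
    nlinarith [sq_nonneg y, mul_pos hF1 hA]
  calc x ^ 2 - (F - 1) * y ^ 2 = (F - 1) * (F - 2) * A
      ↔ x + (F - 1) * y = 0 := by
        rw [← sub_eq_zero, sq_sub_mul_sq_sub_eq_of_mul_eq hp, mul_eq_zero, or_iff_right hxy]
    _ ↔ (x + (F - 1) * y) * (y + (F - 1) * x) = 0 := by
        rw [mul_eq_zero]
        exact ⟨Or.inl, fun h ↦ h.elim id (add_mul_eq_zero_of_add_mul_eq_zero_of_abs_le hF hyx)⟩
    _ ↔ (x + y) ^ 2 = (F - 2) ^ 2 * A := by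
        rw [add_mul_mul_add_mul_eq_of_mul_eq hp, mul_eq_zero, or_iff_right hF1.ne', sub_eq_zero]

end Ordered

theorem Real.sq_eq_sq_mul_iff {s c A : ℝ} (hA : 0 ≤ A) :
    s ^ 2 = c ^ 2 * A ↔ s = c * √A ∨ s = -(c * √A) := by
  rw [← sq_eq_sq_iff_eq_or_eq_neg, mul_pow, Real.sq_sqrt hA]

theorem div_sub_mul_eq_mul_iff {K : Type*} [Field K] {t N k c r : K} (hk : k ≠ 0) (hN : N ≠ 0) :
    t * N / k - c * (N - k) = c * r ↔ t = k * c / N * (N - k + r) := by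
  rw [sub_eq_iff_eq_add, div_eq_iff hk, ← mul_div_right_comm, eq_div_iff hN]
  constructor <;> intro h <;> linear_combination h

theorem higmanian_uniformity_core_general (f m n k : ℤ)
    (hf : 2 ≤ f) (hm : 2 ≤ m) (hn : 2 ≤ n)
    (hk1 : 0 < m * n - k) (hk2 : m * n - k ≤ k)
    (t x₁ x₃ : ℝ)
    (hsum : x₁ + x₃ = t * ((m : ℝ) * n) / k - ((f : ℝ) - 2) * ((m : ℝ) * n - k))
    (hprod : x₁ * x₃ = -(((f : ℝ) - 1) * k * ((m : ℝ) * n - k) / ((m : ℝ) * ((n : ℝ) - 1))))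
    (horder : |x₃| ≤ |x₁|) :
    x₁ ^ 2 - ((f : ℝ) - 1) * x₃ ^ 2 =
        ((f : ℝ) - 1) * ((f : ℝ) - 2) * k * ((m : ℝ) * n - k) / ((m : ℝ) * ((n : ℝ) - 1)) ↔
      t = ((k : ℝ) * ((f : ℝ) - 2) / ((m : ℝ) * n)) *
            ((m : ℝ) * n - k + Real.sqrt ((k : ℝ) * ((m : ℝ) * n - k) / ((m : ℝ) * ((n : ℝ) - 1)))) ∨
      t = ((k : ℝ) * ((f : ℝ) - 2) / ((m : ℝ) * n)) *
            ((m : ℝ) * n - k - Real.sqrt ((k : ℝ) * ((m : ℝ) * n - k) / ((m : ℝ) * ((n : ℝ) - 1)))) := by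
  have hf' : (2 : ℝ) ≤ f := by exact_mod_cast hf
  have hm' : (2 : ℝ) ≤ m := by exact_mod_cast hm
  have hn' : (2 : ℝ) ≤ n := by exact_mod_cast hn
  have hk1' : (0 : ℝ) < m * n - k := by exact_mod_cast hk1
  have hk : (0 : ℝ) < k := hk1'.trans_le (by exact_mod_cast hk2)
  set A : ℝ := k * (m * n - k) / (m * (n - 1)) with hA_def
  have hA : 0 < A := div_pos (mul_pos hk hk1') (mul_pos (by linarith) (by linarith))
  have hp : x₁ * x₃ = -((f - 1) * A) := by rw [hprod, hA_def]; ring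
  rw [show ((f : ℝ) - 1) * (f - 2) * k * (m * n - k) / (m * (n - 1)) = (f - 1) * (f - 2) * A by
      rw [hA_def]; ring,
    sq_sub_mul_sq_eq_iff_add_sq_eq hf' hA hp horder, hsum, Real.sq_eq_sq_mul_iff hA.le, ← mul_neg,
    sub_eq_add_neg (_ - _) √A]
  have hmn : (m : ℝ) * n ≠ 0 := (mul_pos (by linarith) (by linarith)).ne'
  exact or_congr (div_sub_mul_eq_mul_iff hk.ne' hmn) (div_sub_mul_eq_mul_iff hk.ne' hmn)

theorem higmanian_uniformity_core (f m n k : ℤ)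
    (hf : 2 ≤ f) (hm : 2 ≤ m) (hn : 2 ≤ n)
    (hk1 : 0 < m * n - k) (hk2 : m * n - k ≤ k) (hk3 : k < m * n)
    (t x₁ x₃ : ℝ)
    (hsum : x₁ + x₃ = t * ((m : ℝ) * n) / k - ((f : ℝ) - 2) * ((m : ℝ) * n - k))
    (hprod : x₁ * x₃ = -(((f : ℝ) - 1) * k * ((m : ℝ) * n - k) / ((m : ℝ) * ((n : ℝ) - 1))))
    (horder : |x₃| ≤ |x₁|) :
    x₁ ^ 2 - ((f : ℝ) - 1) * x₃ ^ 2 =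
        ((f : ℝ) - 1) * ((f : ℝ) - 2) * k * ((m : ℝ) * n - k) / ((m : ℝ) * ((n : ℝ) - 1)) ↔
      t = ((k : ℝ) * ((f : ℝ) - 2) / ((m : ℝ) * n)) *
            ((m : ℝ) * n - k + Real.sqrt ((k : ℝ) * ((m : ℝ) * n - k) / ((m : ℝ) * ((n : ℝ) - 1)))) ∨
      t = ((k : ℝ) * ((f : ℝ) - 2) / ((m : ℝ) * n)) *
            ((m : ℝ) * n - k - Real.sqrt ((k : ℝ) * ((m : ℝ) * n - k) / ((m : ℝ) * ((n : ℝ) - 1)))) :=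
  higmanian_uniformity_core_general f m n k hf hm hn hk1 hk2 t x₁ x₃ hsum hprod horder
end

section
/- Under the hypotheses below, in the integral group ring ℤ[G × U] one has T̲₃ · T̲₁ = T̲₁ · T̲₃ = T̲₄, where for a subset A of G × U, A̲ denotes the sum of the elements of A. -/
open scoped Pointwise

/-- The sum of the elements of a finite subset `A` of a group `G`
in the integral group ring `ℤ[G]`. -/
noncomputable def grpSum (G : Type*) [Group G] (A : Finset G) : MonoidAlgebra ℤ G :=
  ∑ a ∈ A, MonoidAlgebra.of ℤ G a

theorem linked_system_T3_mul_T1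
    {G U : Type*} [Group G] [Fintype G] [DecidableEq G]
    [Group U] [Fintype U] [DecidableEq U]
    (N : Subgroup G) [DecidablePred (· ∈ N)]
    (n l w μ ν : ℕ) (hn : 2 ≤ n) (hN : Nat.card N = n) (hl : 1 ≤ l)
    (hG : Fintype.card G = n ^ 2 * l) (hU : Fintype.card U = w + 1) (hw : 2 ≤ w)
    (X : U → Finset G)
    (hXinv : ∀ u : U, u ≠ 1 → (X u)⁻¹ = X u⁻¹)
    (hXtrans : ∀ u : U, u ≠ 1 → ∀ g : G, ((X u).filter (fun x => g⁻¹ * x ∈ N)).card = 1)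
    (hXX : ∀ u : U, u ≠ 1 →
      grpSum G (X u) * grpSum G (X u⁻¹) =
        ((n * l : ℕ) : ℤ) • (1 : MonoidAlgebra ℤ G) +
          (l : ℤ) • grpSum G (Finset.univ.filter (· ∉ N)))
    (hXY : ∀ u v : U, u ≠ 1 → v ≠ 1 → u * v ≠ 1 →
      grpSum G (X u) * grpSum G (X v) =
        (μ : ℤ) • grpSum G (X (u * v)) + (ν : ℤ) • grpSum G (Finset.univ \ X (u * v)))
    (T₀ T₁ T₂ T₃ T₄ : Finset (G × U))
    (hT₀ : T₀ = {(1, 1)})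
    (hT₁ : T₁ = ((Finset.univ.filter (· ∈ N)).erase 1) ×ˢ {(1 : U)})
    (hT₂ : T₂ = (Finset.univ.filter (· ∉ N)) ×ˢ {(1 : U)})
    (hT₃ : T₃ = Finset.univ.filter (fun p : G × U => p.2 ≠ 1 ∧ p.1 ∈ X p.2))
    (hT₄ : T₄ = Finset.univ.filter (fun p : G × U => p.2 ≠ 1 ∧ p.1 ∉ X p.2)) :
    grpSum (G × U) T₃ * grpSum (G × U) T₁ = grpSum (G × U) T₄ ∧
    grpSum (G × U) T₁ * grpSum (G × U) T₃ = grpSum (G × U) T₄ := by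
  classical
  subst hT₁ hT₃ hT₄
  have key : ∀ u : U, u ≠ 1 → ∀ x ∈ X u, ∀ x' ∈ X u, x⁻¹ * x' ∈ N → x = x' := by
    intro u hu x hx x' hx' hmem
    obtain ⟨a, ha⟩ := Finset.card_eq_one.mp (hXtrans u hu x)
    have h1 : x ∈ (X u).filter (fun y => x⁻¹ * y ∈ N) :=
      Finset.mem_filter.mpr ⟨hx, by simpa using N.one_mem⟩
    have h2 : x' ∈ (X u).filter (fun y => x⁻¹ * y ∈ N) :=
      Finset.mem_filter.mpr ⟨hx', hmem⟩
    rw [ha, Finset.mem_singleton] at h1 h2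
    rw [h1, h2]
  have exx : ∀ u : U, u ≠ 1 → ∀ g : G, ∃ x ∈ X u, g⁻¹ * x ∈ N := by
    intro u hu g
    obtain ⟨a, ha⟩ := Finset.card_eq_one.mp (hXtrans u hu g)
    have : a ∈ (X u).filter (fun y => g⁻¹ * y ∈ N) := ha ▸ Finset.mem_singleton_self a
    exact ⟨a, (Finset.mem_filter.mp this).1, (Finset.mem_filter.mp this).2⟩
  have huinv : ∀ u : U, u ≠ 1 → u⁻¹ ≠ 1 := fun u hu h => hu (by
    have := congrArg (·⁻¹) h; simpa using this)
  have memXinv : ∀ u : U, u ≠ 1 → ∀ x : G, x ∈ X u ↔ x⁻¹ ∈ X u⁻¹ := by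
    intro u hu x
    rw [← hXinv u hu]
    simp [Finset.mem_inv']
  have key' : ∀ u : U, u ≠ 1 → ∀ x ∈ X u, ∀ x' ∈ X u, ∀ m ∈ N, ∀ m' ∈ N,
      m * x = m' * x' → x = x' := by
    intro u hu x hx x' hx' m hm m' hm' heq
    have hx1 : x⁻¹ ∈ X u⁻¹ := (memXinv u hu x).mp hx
    have hx2 : x'⁻¹ ∈ X u⁻¹ := (memXinv u hu x').mp hx'
    have hxe : x = m⁻¹ * (m' * x') := by rw [← heq]; group
    have hmm : (x⁻¹)⁻¹ * x'⁻¹ ∈ N := by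
      rw [inv_inv, hxe]
      have : m⁻¹ * (m' * x') * x'⁻¹ = m⁻¹ * m' := by group
      rw [this]
      exact N.mul_mem (N.inv_mem hm) hm'
    have := key u⁻¹ (huinv u hu) _ hx1 _ hx2 hmm
    simpa using congrArg (·⁻¹) this
  have exx' : ∀ u : U, u ≠ 1 → ∀ g : G, ∃ m ∈ N, ∃ x ∈ X u, g = m * x := by
    intro u hu g
    obtain ⟨x₀, hx₀, hm⟩ := exx u⁻¹ (huinv u hu) g⁻¹
    refine ⟨g * x₀, by simpa using hm, x₀⁻¹, ?_, by group⟩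
    rw [memXinv u hu x₀⁻¹]
    simpa using hx₀
  have prod_eq : ∀ A B : Finset (G × U), grpSum (G × U) A * grpSum (G × U) B
      = ∑ p ∈ A ×ˢ B, MonoidAlgebra.of ℤ (G × U) (p.1 * p.2) := by
    intro A B
    unfold grpSum
    rw [Finset.sum_mul_sum, ← Finset.sum_product']
    exact Finset.sum_congr rfl fun p _ => (map_mul _ _ _).symm
  constructor
  · rw [prod_eq]
    unfold grpSum
    apply Finset.sum_bij (fun p _ => p.1 * p.2)
    · rintro ⟨⟨x, u⟩, ⟨m, v⟩⟩ hp
      simp only [Finset.mem_product, Finset.mem_filter, Finset.mem_erase,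
        Finset.mem_singleton, Finset.mem_univ, true_and] at hp
      obtain ⟨⟨hu, hx⟩, ⟨hm1, hmN⟩, hv⟩ := hp
      subst hv
      simp only [Finset.mem_filter, Finset.mem_univ, true_and, Prod.mk_mul_mk, mul_one]
      refine ⟨hu, fun hmem => hm1 ?_⟩
      have hmN' : m ∈ N := by simpa using hmN
      have hxx : x = x * m := key u hu _ hx _ hmem (by simpa using hmN')
      have : x * 1 = x * m := by simpa using hxx
      exact (mul_left_cancel this).symm
    · rintro ⟨⟨x, u⟩, ⟨m, v⟩⟩ hp ⟨⟨x', u'⟩, ⟨m', v'⟩⟩ hp' heq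
      simp only [Finset.mem_product, Finset.mem_filter, Finset.mem_erase,
        Finset.mem_singleton, Finset.mem_univ, true_and] at hp hp'
      obtain ⟨⟨hu, hx⟩, ⟨hm1, hmN⟩, hv⟩ := hp
      obtain ⟨⟨hu', hx'⟩, ⟨hm1', hmN'⟩, hv'⟩ := hp'
      subst hv; subst hv'
      simp only [Prod.mk_mul_mk, mul_one, Prod.mk.injEq] at heq
      obtain ⟨hxm, huu⟩ := heq
      subst huu
      have hmNN : m ∈ N := by simpa using hmN
      have hmNN' : m' ∈ N := by simpa using hmN'
      have hxx' : x = x' := by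
        apply key u hu _ hx _ hx'
        have hxe : x' = x * (m * m'⁻¹) := by rw [← mul_assoc, hxm]; group
        have : x⁻¹ * x' = m * m'⁻¹ := by rw [hxe]; group
        rw [this]
        exact N.mul_mem hmNN (N.inv_mem hmNN')
      subst hxx'
      have : m = m' := mul_left_cancel hxm
      simp [this]
    · rintro ⟨y, u⟩ hy
      simp only [Finset.mem_filter, Finset.mem_univ, true_and] at hy
      obtain ⟨hu, hyX⟩ := hy
      obtain ⟨x, hx, hmN⟩ := exx u hu y
      refine ⟨((x, u), (x⁻¹ * y, 1)), ?_, ?_⟩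
      · simp only [Finset.mem_product, Finset.mem_filter, Finset.mem_erase,
          Finset.mem_singleton, Finset.mem_univ, true_and]
        refine ⟨⟨hu, hx⟩, ⟨fun h => ?_, ?_⟩, trivial⟩
        · apply hyX
          have hyx : y = x := by
            have : x * (x⁻¹ * y) = x * 1 := congrArg (x * ·) h
            simpa using this
          rw [hyx]; exact hx
        · simpa using N.inv_mem hmN
      · simp [Prod.ext_iff, mul_assoc]
    · intros; rfl
  · rw [prod_eq]
    unfold grpSum
    apply Finset.sum_bij (fun p _ => p.1 * p.2)
    · rintro ⟨⟨m, v⟩, ⟨x, u⟩⟩ hp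
      simp only [Finset.mem_product, Finset.mem_filter, Finset.mem_erase,
        Finset.mem_singleton, Finset.mem_univ, true_and] at hp
      obtain ⟨⟨⟨hm1, hmN⟩, hv⟩, hu, hx⟩ := hp
      subst hv
      simp only [Finset.mem_filter, Finset.mem_univ, true_and, Prod.mk_mul_mk, one_mul]
      refine ⟨hu, fun hmem => hm1 ?_⟩
      have hmN' : m ∈ N := by simpa using hmN
      have hxx : x = m * x := key' u hu _ hx _ hmem m hmN' 1 N.one_mem (by simp)
      have h2 : 1 * x = m * x := by simpa using hxx
      exact (mul_right_cancel h2).symm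
    · rintro ⟨⟨m, v⟩, ⟨x, u⟩⟩ hp ⟨⟨m', v'⟩, ⟨x', u'⟩⟩ hp' heq
      simp only [Finset.mem_product, Finset.mem_filter, Finset.mem_erase,
        Finset.mem_singleton, Finset.mem_univ, true_and] at hp hp'
      obtain ⟨⟨⟨hm1, hmN⟩, hv⟩, hu, hx⟩ := hp
      obtain ⟨⟨⟨hm1', hmN'⟩, hv'⟩, hu', hx'⟩ := hp'
      subst hv; subst hv'
      simp only [Prod.mk_mul_mk, one_mul, Prod.mk.injEq] at heq
      obtain ⟨hxm, huu⟩ := heq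
      subst huu
      have hmNN : m ∈ N := by simpa using hmN
      have hmNN' : m' ∈ N := by simpa using hmN'
      have hxx' : x = x' := key' u hu _ hx _ hx' m hmNN m' hmNN' hxm
      subst hxx'
      have : m = m' := mul_right_cancel hxm
      simp [this]
    · rintro ⟨y, u⟩ hy
      simp only [Finset.mem_filter, Finset.mem_univ, true_and] at hy
      obtain ⟨hu, hyX⟩ := hy
      obtain ⟨m, hmN, x, hx, hyx⟩ := exx' u hu y
      refine ⟨((m, 1), (x, u)), ?_, ?_⟩
      · simp only [Finset.mem_product, Finset.mem_filter, Finset.mem_erase,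
          Finset.mem_singleton, Finset.mem_univ, true_and]
        refine ⟨⟨⟨fun h => ?_, by simpa using hmN⟩, trivial⟩, hu, hx⟩
        subst h
        apply hyX
        rw [hyx]; simpa using hx
      · simp [Prod.ext_iff, hyx.symm]
    · intros; rfl
end

section
/- Under the hypotheses below, in the integral group ring ℤ[G × U] one has T̲₃ · T̲₂ = T̲₂ · T̲₃ = (nλ − 1)·(T̲₃ + T̲₄), where for a subset A of G × U, A̲ denotes the sum of the elements of A. -/
/-!
Let `ι : ℤ[G] → ℤ[G × U]` be induced by `g ↦ (g, e)`. Then `T₂ = ι(G ∖ N)`,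
`T₃ = ∑_{u ≠ e} ι(X_u) (e, u)` and `T₃ + T₄ = ∑_{u ≠ e} ι(G) (e, u)`, and `(e, u)` commutes
with the image of `ι`. So everything reduces to `X_u (G - N) = (G - N) X_u = (nλ - 1) G` in `ℤ[G]`.
Here `X_u G = G X_u = |X_u| G`, while `X_u N = N X_u = G` because `X_u` is a left transversal
of `N` and, since `X_u⁻¹ = X_{u⁻¹}`, also a right one; hence `|X_u| = [G : N] = nλ`.
-/

open scoped Pointwise

open Finset MonoidAlgebra

section GroupRing

variable {G : Type*} [Group G]

theorem grpSum_sdiff [DecidableEq G] {A B : Finset G} (h : A ⊆ B) :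
    grpSum G (B \ A) = grpSum G B - grpSum G A :=
  eq_sub_of_add_eq (Finset.sum_sdiff h)

variable [Fintype G]

theorem of_mul_grpSum_univ (g : G) : of ℤ G g * grpSum G univ = grpSum G univ := by
  simp only [grpSum, Finset.mul_sum, ← map_mul]
  exact Fintype.sum_equiv (Equiv.mulLeft g) _ _ fun _ => rfl

theorem grpSum_univ_mul_of (g : G) : grpSum G univ * of ℤ G g = grpSum G univ := by
  simp only [grpSum, Finset.sum_mul, ← map_mul]
  exact Fintype.sum_equiv (Equiv.mulRight g) _ _ fun _ => rfl

theorem grpSum_mul_grpSum_univ (A : Finset G) :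
    grpSum G A * grpSum G univ = (#A : ℤ) • grpSum G univ := by
  rw [grpSum.eq_1 G A, Finset.sum_mul]
  simp only [of_mul_grpSum_univ, sum_const, natCast_zsmul]

theorem grpSum_univ_mul_grpSum (A : Finset G) :
    grpSum G univ * grpSum G A = (#A : ℤ) • grpSum G univ := by
  rw [grpSum.eq_1 G A, Finset.mul_sum]
  simp only [grpSum_univ_mul_of, sum_const, natCast_zsmul]

theorem grpSum_mul_grpSum_of_isComplement {A B : Finset G}
    (h : Subgroup.IsComplement (A : Set G) (B : Set G)) :
    grpSum G A * grpSum G B = grpSum G univ := by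
  simp only [grpSum, Finset.sum_mul_sum, ← map_mul, ← Finset.sum_product']
  refine Finset.sum_nbij (fun p => p.1 * p.2) (fun _ _ => mem_univ _) ?_ ?_ fun _ _ => rfl
  · rintro ⟨a, b⟩ hab ⟨a', b'⟩ hab' heq
    simp only [coe_product, Set.mem_prod, mem_coe] at hab hab'
    simpa using
      h.1 (a₁ := (⟨a, hab.1⟩, ⟨b, hab.2⟩)) (a₂ := (⟨a', hab'.1⟩, ⟨b', hab'.2⟩)) heq
  · intro g _
    obtain ⟨⟨a, b⟩, hab⟩ := h.2 g
    exact ⟨(a, b), by simp, hab⟩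

theorem grpSum_mul_grpSum_compl_of_isComplement {A : Finset G} {H : Subgroup G}
    [DecidablePred (· ∈ H)] (h : Subgroup.IsComplement (A : Set G) H) :
    grpSum G A * grpSum G (univ.filter (· ∉ H)) = ((#A : ℤ) - 1) • grpSum G univ := by
  classical
  rw [filter_not, grpSum_sdiff (filter_subset _ _), mul_sub, grpSum_mul_grpSum_univ,
    grpSum_mul_grpSum_of_isComplement (by simpa using h), sub_smul, one_smul]

theorem grpSum_compl_mul_grpSum_of_isComplement {A : Finset G} {H : Subgroup G}
    [DecidablePred (· ∈ H)] (h : Subgroup.IsComplement H (A : Set G)) :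
    grpSum G (univ.filter (· ∉ H)) * grpSum G A = ((#A : ℤ) - 1) • grpSum G univ := by
  classical
  rw [filter_not, grpSum_sdiff (filter_subset _ _), sub_mul, grpSum_univ_mul_grpSum,
    grpSum_mul_grpSum_of_isComplement (by simpa using h), sub_smul, one_smul]

end GroupRing

section Transversal

variable {G : Type*} [Group G]

theorem Subgroup.IsComplement.inv {S T : Set G} (h : Subgroup.IsComplement S T) :
    Subgroup.IsComplement T⁻¹ S⁻¹ := by
  let φ : S × T ≃ (T⁻¹ : Set G) × (S⁻¹ : Set G) :=
    { toFun x := (⟨x.2⁻¹, by simp⟩, ⟨x.1⁻¹, by simp⟩)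
      invFun x := (⟨x.2⁻¹, Set.mem_inv.mp x.2.2⟩, ⟨x.1⁻¹, Set.mem_inv.mp x.1.2⟩)
      left_inv _ := by simp
      right_inv _ := by simp }
  have hφ : (fun x : (T⁻¹ : Set G) × (S⁻¹ : Set G) => x.1.1 * x.2.1) ∘ φ
      = (Equiv.inv G) ∘ fun x : S × T => x.1.1 * x.2.1 :=
    funext fun x => (mul_inv_rev _ _).symm
  unfold Subgroup.IsComplement
  rw [← Equiv.bijective_comp φ, hφ, Equiv.comp_bijective]
  exact h

theorem isComplement_of_card_filter_inv_mul_mem [DecidableEq G] {A : Finset G} {H : Subgroup G}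
    [DecidablePred (· ∈ H)] (hA : ∀ g : G, #(A.filter fun x => g⁻¹ * x ∈ H) = 1) :
    Subgroup.IsComplement (A : Set G) H := by
  refine Subgroup.isComplement_iff_existsUnique_inv_mul_mem.mpr fun g => ?_
  obtain ⟨a, ha⟩ := card_eq_one.mp (hA g)
  have key : ∀ x ∈ A, x⁻¹ * g ∈ H ↔ x = a := fun x hx => by
    rw [← H.inv_mem_iff, mul_inv_rev, inv_inv, ← mem_singleton, ← ha, mem_filter]
    exact (and_iff_right hx).symm
  have haA : a ∈ A := (mem_filter.mp (ha ▸ mem_singleton_self a)).1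
  exact ⟨⟨a, haA⟩, (key a haA).mpr rfl, fun s hs => Subtype.ext ((key s s.2).mp hs)⟩

end Transversal

section Product

variable {G U : Type*} [Group G] [Group U]

theorem commute_mapDomain_inl_of (a : MonoidAlgebra ℤ G) (u : U) :
    Commute (mapDomainRingHom ℤ (MonoidHom.inl G U) a) (of ℤ (G × U) (1, u)) := by
  induction a using MonoidAlgebra.induction_linear with
  | zero => simp
  | add a b ha hb => rw [map_add]; exact ha.add_left hb
  | single g r => simp [Commute, SemiconjBy, single_mul_single]

theorem grpSum_product_singleton_one (S : Finset G) :
    grpSum (G × U) (S ×ˢ {1}) = mapDomainRingHom ℤ (MonoidHom.inl G U) (grpSum G S) := by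
  simp [grpSum, map_sum]

theorem grpSum_filter_snd [Fintype G] [DecidableEq G] [Fintype U] (P : U → Prop) [DecidablePred P]
    (A : U → Finset G) :
    grpSum (G × U) (univ.filter fun p : G × U => P p.2 ∧ p.1 ∈ A p.2) =
      ∑ u ∈ univ.filter P,
        mapDomainRingHom ℤ (MonoidHom.inl G U) (grpSum G (A u)) * of ℤ (G × U) (1, u) := by
  rw [grpSum, sum_filter, Fintype.sum_prod_type_right, sum_filter]
  refine sum_congr rfl fun u _ => ?_
  by_cases hu : P u
  · simp [hu, grpSum, map_sum, sum_mul]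
  · simp [hu]

end Product

theorem linked_system_T3_mul_T2_general
    {G U : Type*} [Group G] [Fintype G] [DecidableEq G]
    [Group U] [Fintype U] [DecidableEq U]
    (N : Subgroup G) [DecidablePred (· ∈ N)]
    (n l : ℕ) (hN : Nat.card N = n)
    (hG : Fintype.card G = n ^ 2 * l)
    (X : U → Finset G)
    (hXinv : ∀ u : U, u ≠ 1 → (X u)⁻¹ = X u⁻¹)
    (hXtrans : ∀ u : U, u ≠ 1 → ∀ g : G, ((X u).filter (fun x => g⁻¹ * x ∈ N)).card = 1)
    (T₂ T₃ T₄ : Finset (G × U))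
    (hT₂ : T₂ = (Finset.univ.filter (· ∉ N)) ×ˢ {(1 : U)})
    (hT₃ : T₃ = Finset.univ.filter (fun p : G × U => p.2 ≠ 1 ∧ p.1 ∈ X p.2))
    (hT₄ : T₄ = Finset.univ.filter (fun p : G × U => p.2 ≠ 1 ∧ p.1 ∉ X p.2)) :
    grpSum (G × U) T₃ * grpSum (G × U) T₂ =
        ((n * l : ℕ) - 1 : ℤ) • (grpSum (G × U) T₃ + grpSum (G × U) T₄) ∧
    grpSum (G × U) T₂ * grpSum (G × U) T₃ =
        ((n * l : ℕ) - 1 : ℤ) • (grpSum (G × U) T₃ + grpSum (G × U) T₄) := by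
  have hleft (u : U) (hu : u ≠ 1) : Subgroup.IsComplement (X u : Set G) N :=
    isComplement_of_card_filter_inv_mul_mem (hXtrans u hu)
  have hright (u : U) (hu : u ≠ 1) : Subgroup.IsComplement N (X u : Set G) := by
    simpa [← hXinv u hu] using (hleft u⁻¹ (inv_ne_one.mpr hu)).inv
  have hcard (u : U) (hu : u ≠ 1) : (#(X u) : ℤ) = (n * l : ℕ) := by
    have := (hleft u hu).card_mul_card
    rw [Nat.card_coe_set_eq, Set.ncard_coe_finset, SetLike.coe_sort_coe, hN,
      Nat.card_eq_fintype_card, hG] at this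
    exact congrArg _ (Nat.eq_of_mul_eq_mul_right (hN ▸ Nat.card_pos) (this.trans (by ring)))
  subst hT₂ hT₃ hT₄
  have hT₃₄ : grpSum (G × U) (univ.filter fun p : G × U => p.2 ≠ 1 ∧ p.1 ∈ X p.2) +
      grpSum (G × U) (univ.filter fun p : G × U => p.2 ≠ 1 ∧ p.1 ∉ X p.2) =
      ∑ u ∈ univ.filter (· ≠ 1),
        mapDomainRingHom ℤ (MonoidHom.inl G U) (grpSum G univ) * of ℤ (G × U) (1, u) := by
    have hT₄ : univ.filter (fun p : G × U => p.2 ≠ 1 ∧ p.1 ∉ X p.2) =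
        univ.filter (fun p : G × U => p.2 ≠ 1 ∧ p.1 ∈ univ \ X p.2) := by
      simp
    rw [hT₄, grpSum_filter_snd (· ≠ 1) X, grpSum_filter_snd (· ≠ 1) (univ \ X ·),
      ← sum_add_distrib]
    simp_rw [← add_mul, ← map_add, grpSum_sdiff (subset_univ _), add_sub_cancel]
  rw [hT₃₄, smul_sum, grpSum_product_singleton_one, grpSum_filter_snd (· ≠ 1) X]
  constructor
  · rw [sum_mul]
    refine sum_congr rfl fun u hu => ?_
    replace hu := (mem_filter.mp hu).2
    rw [mul_assoc, ← (commute_mapDomain_inl_of _ u).eq, ← mul_assoc, ← map_mul,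
      grpSum_mul_grpSum_compl_of_isComplement (hleft u hu), hcard u hu, map_zsmul,
      smul_mul_assoc]
  · rw [mul_sum]
    refine sum_congr rfl fun u hu => ?_
    replace hu := (mem_filter.mp hu).2
    rw [← mul_assoc, ← map_mul, grpSum_compl_mul_grpSum_of_isComplement (hright u hu),
      hcard u hu, map_zsmul, smul_mul_assoc]

theorem linked_system_T3_mul_T2
    {G U : Type*} [Group G] [Fintype G] [DecidableEq G]
    [Group U] [Fintype U] [DecidableEq U]
    (N : Subgroup G) [DecidablePred (· ∈ N)]
    (n l w μ ν : ℕ) (hn : 2 ≤ n) (hN : Nat.card N = n) (hl : 1 ≤ l)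
    (hG : Fintype.card G = n ^ 2 * l) (hU : Fintype.card U = w + 1) (hw : 2 ≤ w)
    (X : U → Finset G)
    (hXinv : ∀ u : U, u ≠ 1 → (X u)⁻¹ = X u⁻¹)
    (hXtrans : ∀ u : U, u ≠ 1 → ∀ g : G, ((X u).filter (fun x => g⁻¹ * x ∈ N)).card = 1)
    (hXX : ∀ u : U, u ≠ 1 →
      grpSum G (X u) * grpSum G (X u⁻¹) =
        ((n * l : ℕ) : ℤ) • (1 : MonoidAlgebra ℤ G) +
          (l : ℤ) • grpSum G (Finset.univ.filter (· ∉ N)))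
    (hXY : ∀ u v : U, u ≠ 1 → v ≠ 1 → u * v ≠ 1 →
      grpSum G (X u) * grpSum G (X v) =
        (μ : ℤ) • grpSum G (X (u * v)) + (ν : ℤ) • grpSum G (Finset.univ \ X (u * v)))
    (T₀ T₁ T₂ T₃ T₄ : Finset (G × U))
    (hT₀ : T₀ = {(1, 1)})
    (hT₁ : T₁ = ((Finset.univ.filter (· ∈ N)).erase 1) ×ˢ {(1 : U)})
    (hT₂ : T₂ = (Finset.univ.filter (· ∉ N)) ×ˢ {(1 : U)})
    (hT₃ : T₃ = Finset.univ.filter (fun p : G × U => p.2 ≠ 1 ∧ p.1 ∈ X p.2))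
    (hT₄ : T₄ = Finset.univ.filter (fun p : G × U => p.2 ≠ 1 ∧ p.1 ∉ X p.2)) :
    grpSum (G × U) T₃ * grpSum (G × U) T₂ =
        ((n * l : ℕ) - 1 : ℤ) • (grpSum (G × U) T₃ + grpSum (G × U) T₄) ∧
    grpSum (G × U) T₂ * grpSum (G × U) T₃ =
        ((n * l : ℕ) - 1 : ℤ) • (grpSum (G × U) T₃ + grpSum (G × U) T₄) :=
  linked_system_T3_mul_T2_general N n l hN hG X hXinv hXtrans T₂ T₃ T₄ hT₂ hT₃ hT₄
end

section
/- Under the hypotheses below, in the integral group ring ℤ[G × U] one has T̲₃ · T̲₃ = w·nλ·T̲₀ + w·λ·T̲₂ + (w−1)·μ·T̲₃ + (w−1)·ν·T̲₄, where for a subset A of G × U, A̲ denotes the sum of the elements of A. -/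
open scoped Pointwise

/-!
Write `x ⊗ t` (`layer t x`) for the copy of `x ∈ ℤ[G]` on the slice `G × {t}` of `G × U`, so that
`T₃ = ∑_{u ≠ 1} X_u ⊗ u` and `(x ⊗ u) (y ⊗ v) = x y ⊗ u v`. Among the `w²` products in `T₃²`,
the `w` pairs `(u, u⁻¹)` each give `X_u X_{u⁻¹} ⊗ 1 = (nλ·e + λ·(G∖N)) ⊗ 1`, and for every
`t ≠ 1` exactly `w - 1` pairs `(u, u⁻¹ t)` with `u ∉ {1, t}` each give
`X_u X_{u⁻¹ t} ⊗ t = (μ X_t + ν (G∖X_t)) ⊗ t`.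
-/

open Finset MonoidAlgebra

theorem Finset.sum_sum_erase {ι M : Type*} [DecidableEq ι] [AddCommMonoid M] (s : Finset ι)
    (f : ι → M) : ∑ u ∈ s, ∑ t ∈ s.erase u, f t = (#s - 1) • ∑ t ∈ s, f t := by
  rw [sum_comm' (t' := s) (s' := s.erase) (by simp only [mem_erase]; tauto), smul_sum]
  exact sum_congr rfl fun t ht => by rw [sum_const, card_erase_of_mem ht]

section Layer

variable {R G U : Type*} [Semiring R]

noncomputable def layer (t : U) : MonoidAlgebra R G →+ MonoidAlgebra R (G × U) where
  toFun := mapDomain (·, t)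
  map_zero' := mapDomain_zero _
  map_add' := mapDomain_add _

@[simp]
lemma layer_single (t : U) (g : G) (r : R) : layer t (single g r) = single (g, t) r :=
  mapDomain_single

lemma layer_mul_layer [Mul G] [Mul U] (u v : U) (x y : MonoidAlgebra R G) :
    layer u x * layer v y = layer (u * v) (x * y) := by
  induction x using induction_linear with
  | zero => simp
  | add x x' hx hx' => simp [add_mul, hx, hx']
  | single g r =>
    induction y using induction_linear with
    | zero => simp
    | add y y' hy hy' => rw [map_add, mul_add, mul_add, hy, hy', map_add]
    | single h s => simp

lemma layer_mul_sum_layer_erase_one [Mul G] [Group U] [Fintype U] [DecidableEq U]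
    (a : U → MonoidAlgebra R G) {u : U} (hu : u ≠ 1) :
    layer u (a u) * ∑ v ∈ univ.erase 1, layer v (a v) =
      layer 1 (a u * a u⁻¹) + ∑ t ∈ (univ.erase 1).erase u, layer t (a u * a (u⁻¹ * t)) := by
  have hreindex : ∑ v ∈ univ.erase 1, layer (u * v) (a u * a v) =
      ∑ t ∈ univ.erase u, layer t (a u * a (u⁻¹ * t)) :=
    sum_nbij' (u * ·) (u⁻¹ * ·) (by simp) (by simp [inv_mul_eq_one, eq_comm]) (by simp) (by simp)
      (by simp)
  rw [mul_sum, sum_congr rfl fun v _ => layer_mul_layer u v _ _, hreindex,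
    ← add_sum_erase _ _ (mem_erase.2 ⟨hu.symm, mem_univ 1⟩), erase_right_comm, mul_one]

lemma sum_layer_mul_sum_layer [Mul G] [Group U] [Fintype U] [DecidableEq U]
    (a F : U → MonoidAlgebra R G) (D : MonoidAlgebra R G) (hD : ∀ u, u ≠ 1 → a u * a u⁻¹ = D)
    (hF : ∀ u v, u ≠ 1 → v ≠ 1 → u * v ≠ 1 → a u * a v = F (u * v)) :
    (∑ u ∈ univ.erase 1, layer u (a u)) * ∑ v ∈ univ.erase 1, layer v (a v) =
      #(univ.erase (1 : U)) • layer 1 D + (#(univ.erase (1 : U)) - 1) •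
        ∑ t ∈ univ.erase 1, layer t (F t) := by
  set E : Finset U := univ.erase 1
  have hrow : ∀ u ∈ E, layer u (a u) * ∑ v ∈ E, layer v (a v) =
      layer 1 D + ∑ t ∈ E.erase u, layer t (F t) := by
    intro u hu
    have hu : u ≠ 1 := ne_of_mem_erase hu
    rw [layer_mul_sum_layer_erase_one a hu, hD u hu]
    refine congrArg _ (sum_congr rfl fun t ht => ?_)
    obtain ⟨htu, ht1⟩ : t ≠ u ∧ t ≠ 1 := by simpa [E] using ht
    rw [hF u (u⁻¹ * t) hu (by simpa [inv_mul_eq_one, eq_comm] using htu) (by simpa using ht1),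
      mul_inv_cancel_left]
  rw [sum_mul, sum_congr rfl hrow, sum_add_distrib, sum_const, sum_sum_erase]

end Layer

section GrpSum

variable {G U : Type*} [Group G] [Group U]

lemma grpSum_singleton (g : G) : grpSum G {g} = of ℤ G g := sum_singleton _ _

lemma grpSum_eq_sum_layer (r : Finset (G × U)) (s : Finset U) (P : U → Finset G)
    (h : ∀ p : G × U, p ∈ r ↔ p.2 ∈ s ∧ p.1 ∈ P p.2) :
    grpSum (G × U) r = ∑ u ∈ s, layer u (grpSum G (P u)) := by
  simp only [grpSum, map_sum, of_apply, layer_single]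
  exact sum_finset_product_right r s P h

end GrpSum

theorem linked_system_T3_mul_T3_general
    {G U : Type*} [Group G] [Fintype G] [DecidableEq G]
    [Group U] [Fintype U] [DecidableEq U]
    (N : Subgroup G) [DecidablePred (· ∈ N)]
    (n l w μ ν : ℕ) (hU : Fintype.card U = w + 1)
    (X : U → Finset G)
    (hXX : ∀ u : U, u ≠ 1 →
      grpSum G (X u) * grpSum G (X u⁻¹) =
        ((n * l : ℕ) : ℤ) • (1 : MonoidAlgebra ℤ G) +
          (l : ℤ) • grpSum G (Finset.univ.filter (· ∉ N)))
    (hXY : ∀ u v : U, u ≠ 1 → v ≠ 1 → u * v ≠ 1 →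
      grpSum G (X u) * grpSum G (X v) =
        (μ : ℤ) • grpSum G (X (u * v)) + (ν : ℤ) • grpSum G (Finset.univ \ X (u * v)))
    (T₀ T₂ T₃ T₄ : Finset (G × U))
    (hT₀ : T₀ = {(1, 1)})
    (hT₂ : T₂ = (Finset.univ.filter (· ∉ N)) ×ˢ {(1 : U)})
    (hT₃ : T₃ = Finset.univ.filter (fun p : G × U => p.2 ≠ 1 ∧ p.1 ∈ X p.2))
    (hT₄ : T₄ = Finset.univ.filter (fun p : G × U => p.2 ≠ 1 ∧ p.1 ∉ X p.2)) :
    grpSum (G × U) T₃ * grpSum (G × U) T₃ =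
        ((w * (n * l) : ℕ) : ℤ) • grpSum (G × U) T₀ +
          ((w * l : ℕ) : ℤ) • grpSum (G × U) T₂ +
          (((w - 1) * μ : ℕ) : ℤ) • grpSum (G × U) T₃ +
          (((w - 1) * ν : ℕ) : ℤ) • grpSum (G × U) T₄ := by
  have h₀ : grpSum (G × U) T₀ = layer 1 1 := by
    rw [grpSum_eq_sum_layer T₀ {1} (fun _ => {1}) (by simp [hT₀, and_comm]), sum_singleton,
      grpSum_singleton, map_one]
  have h₂ : grpSum (G × U) T₂ = layer 1 (grpSum G (univ.filter (· ∉ N))) := by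
    rw [grpSum_eq_sum_layer T₂ {1} (fun _ => univ.filter (· ∉ N))
      (by simp [hT₂, and_comm, eq_comm]), sum_singleton]
  have h₃ : grpSum (G × U) T₃ = ∑ u ∈ univ.erase 1, layer u (grpSum G (X u)) :=
    grpSum_eq_sum_layer T₃ _ _ (by simp [hT₃])
  have h₄ : grpSum (G × U) T₄ = ∑ u ∈ univ.erase 1, layer u (grpSum G (univ \ X u)) :=
    grpSum_eq_sum_layer T₄ _ _ (by simp [hT₄])
  have hw : #(univ.erase (1 : U)) = w := by simp [card_erase_of_mem, hU]
  rw [h₃, sum_layer_mul_sum_layer _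
    (fun t => (μ : ℤ) • grpSum G (X t) + (ν : ℤ) • grpSum G (univ \ X t)) _ hXX hXY, hw]
  simp only [map_add, map_zsmul, sum_add_distrib, ← smul_sum, ← h₀, ← h₂, ← h₃, ← h₄]
  push_cast
  module

theorem linked_system_T3_mul_T3
    {G U : Type*} [Group G] [Fintype G] [DecidableEq G]
    [Group U] [Fintype U] [DecidableEq U]
    (N : Subgroup G) [DecidablePred (· ∈ N)]
    (n l w μ ν : ℕ) (hn : 2 ≤ n) (hN : Nat.card N = n) (hl : 1 ≤ l)
    (hG : Fintype.card G = n ^ 2 * l) (hU : Fintype.card U = w + 1) (hw : 2 ≤ w)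
    (X : U → Finset G)
    (hXinv : ∀ u : U, u ≠ 1 → (X u)⁻¹ = X u⁻¹)
    (hXtrans : ∀ u : U, u ≠ 1 → ∀ g : G, ((X u).filter (fun x => g⁻¹ * x ∈ N)).card = 1)
    (hXX : ∀ u : U, u ≠ 1 →
      grpSum G (X u) * grpSum G (X u⁻¹) =
        ((n * l : ℕ) : ℤ) • (1 : MonoidAlgebra ℤ G) +
          (l : ℤ) • grpSum G (Finset.univ.filter (· ∉ N)))
    (hXY : ∀ u v : U, u ≠ 1 → v ≠ 1 → u * v ≠ 1 →
      grpSum G (X u) * grpSum G (X v) =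
        (μ : ℤ) • grpSum G (X (u * v)) + (ν : ℤ) • grpSum G (Finset.univ \ X (u * v)))
    (T₀ T₁ T₂ T₃ T₄ : Finset (G × U))
    (hT₀ : T₀ = {(1, 1)})
    (hT₁ : T₁ = ((Finset.univ.filter (· ∈ N)).erase 1) ×ˢ {(1 : U)})
    (hT₂ : T₂ = (Finset.univ.filter (· ∉ N)) ×ˢ {(1 : U)})
    (hT₃ : T₃ = Finset.univ.filter (fun p : G × U => p.2 ≠ 1 ∧ p.1 ∈ X p.2))
    (hT₄ : T₄ = Finset.univ.filter (fun p : G × U => p.2 ≠ 1 ∧ p.1 ∉ X p.2)) :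
    grpSum (G × U) T₃ * grpSum (G × U) T₃ =
        ((w * (n * l) : ℕ) : ℤ) • grpSum (G × U) T₀ +
          ((w * l : ℕ) : ℤ) • grpSum (G × U) T₂ +
          (((w - 1) * μ : ℕ) : ℤ) • grpSum (G × U) T₃ +
          (((w - 1) * ν : ℕ) : ℤ) • grpSum (G × U) T₄ :=
  linked_system_T3_mul_T3_general N n l w μ ν hU X hXX hXY T₀ T₂ T₃ T₄ hT₀ hT₂ hT₃ hT₄
end

section
/- Under the hypotheses below, for every element z ∈ T₃, the coefficient of z in the product T̲₃ · T̲₄ ∈ ℤ[G × U] equals (n−1)(w−1)ν, where for a subset A of G × U, A̲ denotes the sum of the elements of A. (Equivalently, the structure constant p_{T₃T₄}^{T₃} of the S-ring spanned by T₀,…,T₄ equals (n−1)(w−1)ν.) -/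
open scoped Pointwise

/-!
Write `z = (g, c)` with `c ≠ 1` and `g ∈ X_c`. A factorisation `z = (x, u) (y, v)` with
`(x, u) ∈ T₃`, `(y, v) ∈ T₄` forces `v = u⁻¹ c`, so the coefficient is the sum over
`u ∉ {1, c}` of the coefficient of `g` in `X_u (G ∖ X_v) = X_u G - X_u X_v`, which is
`|X_u| - μ` by the linking relation for `(u, v)`; here `|X_u| = |G| / |N| = nλ` because `X_u`
is a left transversal of `N`. Applying the augmentation to that relation gives
`(nλ)² = μ nλ + ν (n²λ - nλ)`, i.e. `nλ - μ = (n - 1) ν`, and there are `w - 1` admissible `u`.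
-/

open Finset

section GroupRing

variable {G : Type*} [Group G]

variable (G) in
noncomputable def augmentation : MonoidAlgebra ℤ G →ₐ[ℤ] ℤ :=
  MonoidAlgebra.lift ℤ ℤ G 1

lemma augmentation_grpSum (A : Finset G) : augmentation G (grpSum G A) = #A := by
  simp [augmentation, grpSum]

variable [DecidableEq G]

lemma coeff_grpSum (A : Finset G) (g : G) :
    (grpSum G A).coeff g = if g ∈ A then 1 else 0 := by
  simp [grpSum, MonoidAlgebra.coeff_sum, Finsupp.finsetSum_apply, MonoidAlgebra.coeff_single,
    Finsupp.single_apply]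

lemma coeff_grpSum_mul_grpSum (A B : Finset G) (g : G) :
    (grpSum G A * grpSum G B).coeff g = #{p ∈ A ×ˢ B | p.1 * p.2 = g} := by
  simp only [grpSum, sum_mul_sum, ← sum_product', MonoidAlgebra.of_apply,
    MonoidAlgebra.single_mul_single, MonoidAlgebra.coeff_sum, Finsupp.finsetSum_apply,
    MonoidAlgebra.coeff_single, Finsupp.single_apply, mul_one, sum_boole]

variable [Fintype G]

lemma card_filter_product_univ_mul_eq (A : Finset G) (g : G) :
    #{p ∈ A ×ˢ univ | p.1 * p.2 = g} = #A := by
  refine card_nbij' Prod.fst (fun a => (a, a⁻¹ * g)) ?_ ?_ ?_ ?_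
  · intro p hp
    simp_all
  · intro a ha
    simp_all
  · rintro ⟨a, b⟩ hp
    simp_all [← (mem_filter.mp hp).2]
  · intro a _
    rfl

lemma coeff_grpSum_mul_grpSum_compl (A B : Finset G) (g : G) :
    (grpSum G A * grpSum G (univ \ B)).coeff g = #A - (grpSum G A * grpSum G B).coeff g := by
  have hcompl : grpSum G (univ \ B) = grpSum G univ - grpSum G B :=
    sum_sdiff_eq_sub (subset_univ B)
  rw [hcompl, mul_sub, MonoidAlgebra.coeff_sub, Finsupp.sub_apply, coeff_grpSum_mul_grpSum A univ,
    card_filter_product_univ_mul_eq]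

end GroupRing

section ProductGroup

variable {G U : Type*} [Group G] [Fintype G] [DecidableEq G] [Group U] [Fintype U] [DecidableEq U]

lemma coeff_grpSum_prod_mul_grpSum_prod (A B : U → Finset G) (g : G) (c : U) :
    (grpSum (G × U) {p | p.1 ∈ A p.2} * grpSum (G × U) {p | p.1 ∈ B p.2}).coeff (g, c) =
      ∑ u, (grpSum G (A u) * grpSum G (B (u⁻¹ * c))).coeff g := by
  simp only [coeff_grpSum_mul_grpSum, ← Nat.cast_sum, ← card_sigma]
  congr 1
  refine card_nbij' (fun q => ⟨q.1.2, (q.1.1, q.2.1)⟩)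
    (fun s => ((s.2.1, s.1), (s.2.2, s.1⁻¹ * c))) ?_ ?_ ?_ ?_
  · rintro ⟨⟨x, u⟩, y, v⟩ hq
    simp only [coe_filter, mem_product, mem_filter, mem_univ, true_and, Prod.mk_mul_mk,
      Prod.mk.injEq, Set.mem_ofPred_eq] at hq
    obtain ⟨⟨hx, hy⟩, hxy, rfl⟩ := hq
    simp [hx, hy, hxy]
  · rintro ⟨u, x, y⟩ hs
    simp_all
  · rintro ⟨⟨x, u⟩, y, v⟩ hq
    simp only [coe_filter, mem_product, mem_filter, mem_univ, true_and, Prod.mk_mul_mk,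
      Prod.mk.injEq, Set.mem_ofPred_eq] at hq
    obtain ⟨-, -, rfl⟩ := hq
    simp
  · intro s _
    rfl

lemma coeff_grpSum_filter_mem_mul_grpSum_filter_notMem (X : U → Finset G) (g : G) (c : U) :
    (grpSum (G × U) (univ.filter fun p : G × U => p.2 ≠ 1 ∧ p.1 ∈ X p.2) *
        grpSum (G × U) (univ.filter fun p : G × U => p.2 ≠ 1 ∧ p.1 ∉ X p.2)).coeff (g, c) =
      ∑ u ∈ (univ.erase 1).erase c, (grpSum G (X u) * grpSum G (univ \ X (u⁻¹ * c))).coeff g := by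
  have hS : (univ.filter fun p : G × U => p.2 ≠ 1 ∧ p.1 ∈ X p.2) =
      univ.filter fun p : G × U => p.1 ∈ if p.2 = 1 then ∅ else X p.2 := by
    ext p; by_cases hp : p.2 = 1 <;> simp [hp]
  have hT : (univ.filter fun p : G × U => p.2 ≠ 1 ∧ p.1 ∉ X p.2) =
      univ.filter fun p : G × U => p.1 ∈ if p.2 = 1 then ∅ else univ \ X p.2 := by
    ext p; by_cases hp : p.2 = 1 <;> simp [hp]
  rw [hS, hT, coeff_grpSum_prod_mul_grpSum_prod (fun u => if u = 1 then ∅ else X u)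
    (fun u => if u = 1 then ∅ else univ \ X u), ← sum_subset (subset_univ _)]
  · refine sum_congr rfl fun u hu => ?_
    obtain ⟨huc, hu1⟩ : u ≠ c ∧ u ≠ 1 := by simpa using hu
    simp only [inv_mul_eq_one, hu1, huc, if_false]
  · intro u _ hu
    obtain rfl | rfl : u = c ∨ u = 1 := by simp at hu; tauto
    all_goals simp [grpSum]

end ProductGroup

lemma Subgroup.isComplement_of_card_filter_inv_mul_mem_eq_one {G : Type*} [Group G]
    (N : Subgroup G) [DecidablePred (· ∈ N)] (X : Finset G)
    (hX : ∀ g : G, #{x ∈ X | g⁻¹ * x ∈ N} = 1) : Subgroup.IsComplement (X : Set G) N := by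
  refine Subgroup.isComplement_iff_existsUnique_inv_mul_mem.mpr fun g => ?_
  obtain ⟨x, hx⟩ := Finset.card_eq_one.mp (hX g)
  have hmem : ∀ y ∈ X, (y⁻¹ * g ∈ N ↔ y = x) := fun y hy => by
    rw [← N.inv_mem_iff, mul_inv_rev, inv_inv]
    simpa [hy] using congrArg (y ∈ ·) hx
  have hxX : x ∈ X := (mem_filter.mp (hx ▸ mem_singleton_self x)).1
  exact ⟨⟨x, hxX⟩, (hmem x hxX).mpr rfl, fun y hy => Subtype.ext ((hmem y y.2).mp hy)⟩

lemma card_mul_card_eq_of_card_filter_inv_mul_mem_eq_one {G : Type*} [Group G] [Fintype G]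
    (N : Subgroup G) [DecidablePred (· ∈ N)] (X : Finset G)
    (hX : ∀ g : G, #{x ∈ X | g⁻¹ * x ∈ N} = 1) : #X * Nat.card N = Fintype.card G := by
  simpa [Nat.card_eq_fintype_card] using
    (N.isComplement_of_card_filter_inv_mul_mem_eq_one X hX).card_mul_card

section Linked

variable {G : Type*} [Group G] [Fintype G] [DecidableEq G] {X Y Z : Finset G} {m n μ ν : ℕ}

lemma eq_add_mul_of_grpSum_mul_eq
    (h : grpSum G X * grpSum G Y = (μ : ℤ) • grpSum G Z + (ν : ℤ) • grpSum G (univ \ Z))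
    (hX : #X = m) (hY : #Y = m) (hZ : #Z = m) (hm : 0 < m) (hG : Fintype.card G = n * m) :
    m = μ + (n - 1) * ν := by
  have haug := congrArg (augmentation G) h
  simp only [map_mul, map_add, map_zsmul, augmentation_grpSum, card_univ_sdiff, hX, hY, hZ, hG,
    smul_eq_mul] at haug
  have hcompl : n * m - m = m * (n - 1) := by rw [Nat.mul_sub_one, mul_comm]
  rw [hcompl] at haug
  have haug' : m * m = μ * m + ν * (m * (n - 1)) := by exact_mod_cast haug
  refine Nat.eq_of_mul_eq_mul_left hm ?_
  rw [haug']
  ring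

lemma coeff_grpSum_mul_grpSum_compl_of_mem
    (h : grpSum G X * grpSum G Y = (μ : ℤ) • grpSum G Z + (ν : ℤ) • grpSum G (univ \ Z))
    (hX : #X = m) (hY : #Y = m) (hZ : #Z = m) (hG : Fintype.card G = n * m)
    {g : G} (hg : g ∈ Z) :
    (grpSum G X * grpSum G (univ \ Y)).coeff g = ((n - 1) * ν : ℕ) := by
  have hm : 0 < m := hZ ▸ card_pos.mpr ⟨g, hg⟩
  rw [coeff_grpSum_mul_grpSum_compl, h, MonoidAlgebra.coeff_add, Finsupp.add_apply,
    MonoidAlgebra.coeff_smul_apply, MonoidAlgebra.coeff_smul_apply, coeff_grpSum, coeff_grpSum,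
    if_pos hg, if_neg (notMem_sdiff_of_mem_right hg), hX,
    eq_add_mul_of_grpSum_mul_eq h hX hY hZ hm hG]
  push_cast
  ring

end Linked

theorem linked_system_structure_constant_t_general
    {G U : Type*} [Group G] [Fintype G] [DecidableEq G]
    [Group U] [Fintype U] [DecidableEq U]
    (N : Subgroup G) [DecidablePred (· ∈ N)]
    (n l w μ ν : ℕ) (hN : Nat.card N = n)
    (hG : Fintype.card G = n ^ 2 * l) (hU : Fintype.card U = w + 1)
    (X : U → Finset G)
    (hXtrans : ∀ u : U, u ≠ 1 → ∀ g : G, ((X u).filter (fun x => g⁻¹ * x ∈ N)).card = 1)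
    (hXY : ∀ u v : U, u ≠ 1 → v ≠ 1 → u * v ≠ 1 →
      grpSum G (X u) * grpSum G (X v) =
        (μ : ℤ) • grpSum G (X (u * v)) + (ν : ℤ) • grpSum G (Finset.univ \ X (u * v)))
    (T₃ T₄ : Finset (G × U))
    (hT₃ : T₃ = Finset.univ.filter (fun p : G × U => p.2 ≠ 1 ∧ p.1 ∈ X p.2))
    (hT₄ : T₄ = Finset.univ.filter (fun p : G × U => p.2 ≠ 1 ∧ p.1 ∉ X p.2)) :
    ∀ z ∈ T₃,
      ((grpSum (G × U) T₃ * grpSum (G × U) T₄ : MonoidAlgebra ℤ (G × U)).coeff :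
          (G × U) →₀ ℤ) z = ((n - 1) * (w - 1) * ν : ℕ) := by
  subst hT₃ hT₄
  rintro ⟨g, c⟩ hz
  obtain ⟨hc, hg⟩ : c ≠ 1 ∧ g ∈ X c := by simpa using hz
  have hcard : ∀ u ≠ 1, #(X u) = n * l := fun u hu => by
    have h := card_mul_card_eq_of_card_filter_inv_mul_mem_eq_one N (X u) (hXtrans u hu)
    rw [hN, hG] at h
    exact Nat.eq_of_mul_eq_mul_right (hN ▸ Nat.card_pos) (h.trans (by ring))
  have hterm : ∀ u ∈ (univ.erase 1).erase c,
      (grpSum G (X u) * grpSum G (univ \ X (u⁻¹ * c))).coeff g = ((n - 1) * ν : ℕ) := by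
    intro u hu
    obtain ⟨huc, hu⟩ : u ≠ c ∧ u ≠ 1 := by simpa using hu
    have hv : u⁻¹ * c ≠ 1 := fun h => huc (inv_mul_eq_one.mp h)
    have hprod := hXY u (u⁻¹ * c) hu hv (by rwa [mul_inv_cancel_left])
    rw [mul_inv_cancel_left] at hprod
    exact coeff_grpSum_mul_grpSum_compl_of_mem hprod (hcard u hu) (hcard _ hv) (hcard c hc)
      (by rw [hG]; ring) hg
  have hcount : #((univ.erase 1).erase c) = w - 1 := by
    rw [card_erase_of_mem (mem_erase.mpr ⟨hc, mem_univ c⟩), card_erase_of_mem (mem_univ 1),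
      card_univ, hU]
    rfl
  rw [coeff_grpSum_filter_mem_mul_grpSum_filter_notMem, sum_congr rfl hterm, sum_const, hcount,
    nsmul_eq_mul]
  push_cast
  ring

theorem linked_system_structure_constant_t
    {G U : Type*} [Group G] [Fintype G] [DecidableEq G]
    [Group U] [Fintype U] [DecidableEq U]
    (N : Subgroup G) [DecidablePred (· ∈ N)]
    (n l w μ ν : ℕ) (hn : 2 ≤ n) (hN : Nat.card N = n) (hl : 1 ≤ l)
    (hG : Fintype.card G = n ^ 2 * l) (hU : Fintype.card U = w + 1) (hw : 2 ≤ w)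
    (X : U → Finset G)
    (hXinv : ∀ u : U, u ≠ 1 → (X u)⁻¹ = X u⁻¹)
    (hXtrans : ∀ u : U, u ≠ 1 → ∀ g : G, ((X u).filter (fun x => g⁻¹ * x ∈ N)).card = 1)
    (hXX : ∀ u : U, u ≠ 1 →
      grpSum G (X u) * grpSum G (X u⁻¹) =
        ((n * l : ℕ) : ℤ) • (1 : MonoidAlgebra ℤ G) +
          (l : ℤ) • grpSum G (Finset.univ.filter (· ∉ N)))
    (hXY : ∀ u v : U, u ≠ 1 → v ≠ 1 → u * v ≠ 1 →
      grpSum G (X u) * grpSum G (X v) =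
        (μ : ℤ) • grpSum G (X (u * v)) + (ν : ℤ) • grpSum G (Finset.univ \ X (u * v)))
    (T₀ T₁ T₂ T₃ T₄ : Finset (G × U))
    (hT₀ : T₀ = {(1, 1)})
    (hT₁ : T₁ = ((Finset.univ.filter (· ∈ N)).erase 1) ×ˢ {(1 : U)})
    (hT₂ : T₂ = (Finset.univ.filter (· ∉ N)) ×ˢ {(1 : U)})
    (hT₃ : T₃ = Finset.univ.filter (fun p : G × U => p.2 ≠ 1 ∧ p.1 ∈ X p.2))
    (hT₄ : T₄ = Finset.univ.filter (fun p : G × U => p.2 ≠ 1 ∧ p.1 ∉ X p.2)) :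
    ∀ z ∈ T₃,
      ((grpSum (G × U) T₃ * grpSum (G × U) T₄ : MonoidAlgebra ℤ (G × U)).coeff :
          (G × U) →₀ ℤ) z = ((n - 1) * (w - 1) * ν : ℕ) :=
  linked_system_structure_constant_t_general N n l w μ ν hN hG hU X hXtrans hXY T₃ T₄ hT₃ hT₄
end
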